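/- arXiv:1509.00051 — 2 statements merged into one kernel-verified Lean document; each statement's English description precedes it below -/
import Mathlib

section
/- Let X be a finite set of observations with |X| ≥ 3 and let x, y, z ∈ X. Suppose that every band b ∈ B that contains y at some time also contains x or z at some time, i.e., B_{xy} ∪ B_{yz} ∪ B_{xz} = B_{xz}. Then D_{xz} ≤ D_{xy} + D_{yz}. -/
open Finset
open scoped Classical

/-- The set of times at which observation `x` lies within the band determined by the
unordered pair `s` of observations: times `t` with `b_ℓ(t) ≤ x t ≤ b_u(t)`. -/
noncomputable def timesInS {T : Type*} [Fintype T] (s : Sym2 (T → ℝ)) (x : T → ℝ) : Finset T :=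
  Finset.univ.filter (fun t =>
    Sym2.lift ⟨fun v w => min (v t) (w t), fun v w => min_comm (v t) (w t)⟩ s ≤ x t ∧
    x t ≤ Sym2.lift ⟨fun v w => max (v t) (w t), fun v w => max_comm (v t) (w t)⟩ s)

/-- The set of bands of a dataset `X`: one band for each unordered pair of distinct
observations in `X`. -/
noncomputable def bands {T : Type*} [Fintype T] (X : Finset (T → ℝ)) : Finset (Sym2 (T → ℝ)) :=
  X.sym2.filter (fun s => ¬ s.IsDiag)

/-- Bandwise (Jaccard) similarity of `x` and `y` with respect to the band `s`. -/
noncomputable def bandSimS {T : Type*} [Fintype T] (s : Sym2 (T → ℝ)) (x y : T → ℝ) : ℝ :=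
  if timesInS s x ∪ timesInS s y = ∅ then 1
  else ((timesInS s x ∩ timesInS s y).card : ℝ) / ((timesInS s x ∪ timesInS s y).card : ℝ)

/-- Bandwise (Jaccard) distance of `x` and `y` with respect to the band `s`. -/
noncomputable def bandDistS {T : Type*} [Fintype T] (s : Sym2 (T → ℝ)) (x y : T → ℝ) : ℝ :=
  1 - bandSimS s x y

/-- `B_{xy}`: the set of bands of `X` containing `x` or `y` at some time. -/
noncomputable def Bxy {T : Type*} [Fintype T] (X : Finset (T → ℝ)) (x y : T → ℝ) :
    Finset (Sym2 (T → ℝ)) :=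
  (bands X).filter (fun s => timesInS s x ∪ timesInS s y ≠ ∅)

/-- The band distance `D_{xy}`: the average bandwise distance over all bands in `B_{xy}`. -/
noncomputable def bandD {T : Type*} [Fintype T] (X : Finset (T → ℝ)) (x y : T → ℝ) : ℝ :=
  (1 / ((Bxy X x y).card : ℝ)) * ∑ s ∈ Bxy X x y, bandDistS s x y

open scoped symmDiff

/-- Core arithmetic inequality behind the Jaccard triangle inequality. -/
lemma jac_aux (s i a1 i1 a2 i2 : ℝ) (hs : 0 ≤ s) (hi : 0 ≤ i) (ha1 : 0 ≤ a1)
    (hi1 : 0 ≤ i1) (ha2 : 0 ≤ a2) (hi2 : 0 ≤ i2)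
    (h1 : s ≤ a1 + a2) (h2 : i1 ≤ i + a2) (h3 : i2 ≤ i + a1) :
    s / (s + i) ≤ a1 / (a1 + i1) + a2 / (a2 + i2) := by
  rcases eq_or_lt_of_le (by positivity : (0:ℝ) ≤ s + i) with h | hpos
  · have hs0 : s = 0 := by linarith
    rw [hs0, zero_div]
    positivity
  · have hD : 0 < a1 + a2 + i := by linarith
    have hs' : s / (s + i) ≤ (a1 + a2) / (a1 + a2 + i) := by
      rw [div_le_div_iff₀ hpos hD]
      nlinarith
    have t1 : a1 / (a1 + a2 + i) ≤ a1 / (a1 + i1) := by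
      rcases eq_or_lt_of_le (by positivity : (0:ℝ) ≤ a1 + i1) with h | h
      · have : a1 = 0 := by linarith
        simp [this]
      · apply div_le_div_of_nonneg_left ha1 h (by linarith)
    have t2 : a2 / (a1 + a2 + i) ≤ a2 / (a2 + i2) := by
      rcases eq_or_lt_of_le (by positivity : (0:ℝ) ≤ a2 + i2) with h | h
      · have : a2 = 0 := by linarith
        simp [this]
      · apply div_le_div_of_nonneg_left ha2 h (by linarith)
    calc s / (s + i) ≤ (a1 + a2) / (a1 + a2 + i) := hs'
      _ = a1 / (a1 + a2 + i) + a2 / (a1 + a2 + i) := by ring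
      _ ≤ a1 / (a1 + i1) + a2 / (a2 + i2) := add_le_add t1 t2

lemma card_symmDiff_add_card_inter {α : Type*} [DecidableEq α] (A B : Finset α) :
    (A ∆ B).card + (A ∩ B).card = (A ∪ B).card := by
  rw [symmDiff_eq_sup_sdiff_inf]
  show ((A ∪ B) \ (A ∩ B)).card + (A ∩ B).card = (A ∪ B).card
  rw [card_sdiff_of_subset (inter_subset_union)]
  exact Nat.sub_add_cancel (card_le_card inter_subset_union)

lemma bandDistS_eq {T : Type*} [Fintype T] (s : Sym2 (T → ℝ)) (x y : T → ℝ) :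
    bandDistS s x y = ((timesInS s x ∆ timesInS s y).card : ℝ) /
      (((timesInS s x ∆ timesInS s y).card : ℝ) + ((timesInS s x ∩ timesInS s y).card : ℝ)) := by
  unfold bandDistS bandSimS
  set A := timesInS s x
  set B := timesInS s y
  by_cases h : A ∪ B = ∅
  · obtain ⟨hA, hB⟩ := Finset.union_eq_empty.mp h
    simp [h, hA, hB]
  · have key : ((A ∆ B).card : ℝ) + ((A ∩ B).card : ℝ) = ((A ∪ B).card : ℝ) := by
      exact_mod_cast card_symmDiff_add_card_inter A B
    have hu : (0:ℝ) < ((A ∪ B).card : ℝ) := by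
      exact_mod_cast Finset.card_pos.mpr (Finset.nonempty_of_ne_empty h)
    rw [if_neg h, key]
    have hd : ((A ∆ B).card : ℝ) = ((A ∪ B).card : ℝ) - ((A ∩ B).card : ℝ) := by linarith
    rw [hd]
    field_simp

lemma bandDistS_nonneg {T : Type*} [Fintype T] (s : Sym2 (T → ℝ)) (x y : T → ℝ) :
    0 ≤ bandDistS s x y := by
  rw [bandDistS_eq]; positivity

lemma bandDistS_eq_zero {T : Type*} [Fintype T] (s : Sym2 (T → ℝ)) (x y : T → ℝ)
    (h : timesInS s x ∪ timesInS s y = ∅) : bandDistS s x y = 0 := by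
  unfold bandDistS bandSimS
  rw [if_pos h]; ring

lemma bandDistS_triangle {T : Type*} [Fintype T] (s : Sym2 (T → ℝ)) (x y z : T → ℝ) :
    bandDistS s x z ≤ bandDistS s x y + bandDistS s y z := by
  set A := timesInS s x
  set B := timesInS s y
  set C := timesInS s z
  rw [bandDistS_eq, bandDistS_eq, bandDistS_eq]
  have h1 : (A ∆ C).card ≤ (A ∆ B).card + (B ∆ C).card :=
    le_trans (card_le_card (symmDiff_triangle A B C)) (card_union_le _ _)
  have h2 : (A ∩ B).card ≤ (A ∩ C).card + (B ∆ C).card := by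
    refine le_trans (card_le_card ?_) (card_union_le _ _)
    intro t ht
    simp only [mem_inter, mem_union, Finset.mem_symmDiff] at *
    tauto
  have h3 : (B ∩ C).card ≤ (A ∩ C).card + (A ∆ B).card := by
    refine le_trans (card_le_card ?_) (card_union_le _ _)
    intro t ht
    simp only [mem_inter, mem_union, Finset.mem_symmDiff] at *
    tauto
  apply jac_aux <;> first
    | positivity
    | (exact_mod_cast h1)
    | (push_cast; exact_mod_cast h2)
    | (push_cast; exact_mod_cast h3)

lemma part_avg {α : Type*} (S Tt : Finset α) (f : α → ℝ) (hsub : S ⊆ Tt)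
    (hnn : ∀ b ∈ Tt, 0 ≤ f b) (hz : ∀ b ∈ Tt, b ∉ S → f b = 0) :
    (1 / (Tt.card : ℝ)) * ∑ b ∈ Tt, f b ≤ (1 / (S.card : ℝ)) * ∑ b ∈ S, f b := by
  have hsum : ∑ b ∈ S, f b = ∑ b ∈ Tt, f b := Finset.sum_subset hsub hz
  rw [← hsum]
  rcases S.eq_empty_or_nonempty with h | h
  · have : ∑ b ∈ S, f b = 0 := by simp [h]
    simp [this]
  · have hS : (0:ℝ) < (S.card : ℝ) := by exact_mod_cast Finset.card_pos.mpr h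
    have hST : (S.card : ℝ) ≤ (Tt.card : ℝ) := by exact_mod_cast card_le_card hsub
    have hsnn : 0 ≤ ∑ b ∈ S, f b := Finset.sum_nonneg fun b hb => hnn b (hsub hb)
    apply mul_le_mul_of_nonneg_right _ hsnn
    apply one_div_le_one_div_of_le hS hST


lemma bandD_nonneg {T : Type*} [Fintype T] (X : Finset (T → ℝ)) (x y : T → ℝ) :
    0 ≤ bandD X x y := by
  apply mul_nonneg (by positivity)
  exact Finset.sum_nonneg fun s _ => bandDistS_nonneg s x y

/-- Triangle inequality for the band distance in the special case where every band
containing `y` at some time also contains `x` or `z` at some time, i.e.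
`B_{xy} ∪ B_{yz} ∪ B_{xz} = B_{xz}`. -/
theorem bandD_triangle_of_no_extra_bands {T : Type*} [Fintype T] [Nonempty T]
    (X : Finset (T → ℝ)) (hX : 3 ≤ X.card)
    (x y z : T → ℝ) (hx : x ∈ X) (hy : y ∈ X) (hz : z ∈ X)
    (hq : Bxy X x y ∪ Bxy X y z ∪ Bxy X x z = Bxy X x z) :
    bandD X x z ≤ bandD X x y + bandD X y z := by
  have hsub_xy : Bxy X x y ⊆ Bxy X x z := by
    rw [← hq]; intro b hb
    exact mem_union_left _ (mem_union_left _ hb)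
  have hsub_yz : Bxy X y z ⊆ Bxy X x z := by
    rw [← hq]; intro b hb
    exact mem_union_left _ (mem_union_right _ hb)
  have hz_xy : ∀ b ∈ Bxy X x z, b ∉ Bxy X x y → bandDistS b x y = 0 := by
    intro b hb hbn
    have hbands : b ∈ bands X := (Finset.mem_filter.mp hb).1
    apply bandDistS_eq_zero
    by_contra hne
    exact hbn (Finset.mem_filter.mpr ⟨hbands, hne⟩)
  have hz_yz : ∀ b ∈ Bxy X x z, b ∉ Bxy X y z → bandDistS b y z = 0 := by
    intro b hb hbn
    have hbands : b ∈ bands X := (Finset.mem_filter.mp hb).1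
    apply bandDistS_eq_zero
    by_contra hne
    exact hbn (Finset.mem_filter.mpr ⟨hbands, hne⟩)
  have step1 : bandD X x z ≤
      (1 / ((Bxy X x z).card : ℝ)) * ∑ b ∈ Bxy X x z, bandDistS b x y +
      (1 / ((Bxy X x z).card : ℝ)) * ∑ b ∈ Bxy X x z, bandDistS b y z := by
    rw [← mul_add, ← Finset.sum_add_distrib]
    unfold bandD
    apply mul_le_mul_of_nonneg_left _ (by positivity)
    exact Finset.sum_le_sum fun b _ => bandDistS_triangle b x y z
  refine le_trans step1 (add_le_add ?_ ?_)
  · exact part_avg _ _ _ hsub_xy (fun b _ => bandDistS_nonneg b x y) hz_xy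
  · exact part_avg _ _ _ hsub_yz (fun b _ => bandDistS_nonneg b y z) hz_yz
end

section
/- Let X be a finite set of observations with |X| ≥ 3. For all x, y, z ∈ X, the band distance satisfies the triangle inequality: D_{xz} ≤ D_{xy} + D_{yz}. -/
open Finset
open scoped Classical

/-!
Both the bandwise distance and the band distance average per-index distances `d i ∈ [0, 1]`
over the indices where `x` or `y` is active, with `d i x y = 1` when exactly one of them is:
for `bandDistS` the indices are times and `d i` is the indicator of the symmetric difference
(giving the Jaccard distance), for `bandD` they are bands and `d i` is `bandDistS`.
Such an average `S_xy / N_xy` satisfies the triangle inequality: if `m` counts the indices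
where only `y` is active, then `S_xz + m ≤ S_xy + S_yz` pointwise, and
`S_xz / N_xz ≤ (S_xz + m) / (N_xz + m) ≤ (S_xy + S_yz) / (N_xz + m)`, whose denominator
dominates both `N_xy` and `N_yz`.
-/

lemma div_le_add_div_add {S N m : ℝ} (hS : 0 ≤ S) (hSN : S ≤ N) (hm : 0 ≤ m) :
    S / N ≤ (S + m) / (N + m) := by
  rcases hSN.lt_or_eq with hlt | rfl
  · rw [div_le_div_iff₀ (hS.trans_lt hlt) (by linarith)]
    nlinarith
  · rcases hS.lt_or_eq with hpos | rfl
    · rw [div_self hpos.ne', div_self (by linarith)]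
    · simp only [zero_div, zero_add]
      positivity

lemma div_le_div_of_nonneg_left_of_le {a b c : ℝ} (ha : 0 ≤ a) (hab : a ≤ b) (hbc : b ≤ c) :
    a / c ≤ a / b := by
  rcases (ha.trans hab).lt_or_eq with hb | rfl
  · exact div_le_div_of_nonneg_left ha hb hbc
  · simp [le_antisymm hab ha]

lemma div_le_div_add_div_of_add_le {S N m S₁ N₁ S₂ N₂ : ℝ} (hS : 0 ≤ S) (hSN : S ≤ N)
    (hm : 0 ≤ m) (hS₁ : 0 ≤ S₁) (hS₁N : S₁ ≤ N₁) (hS₂ : 0 ≤ S₂) (hS₂N : S₂ ≤ N₂)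
    (hN₁ : N₁ ≤ N + m) (hN₂ : N₂ ≤ N + m) (hsum : S + m ≤ S₁ + S₂) :
    S / N ≤ S₁ / N₁ + S₂ / N₂ :=
  calc S / N ≤ (S + m) / (N + m) := div_le_add_div_add hS hSN hm
    _ ≤ (S₁ + S₂) / (N + m) := by gcongr; linarith
    _ = S₁ / (N + m) + S₂ / (N + m) := add_div _ _ _
    _ ≤ S₁ / N₁ + S₂ / N₂ := add_le_add (div_le_div_of_nonneg_left_of_le hS₁ hS₁N hN₁)
        (div_le_div_of_nonneg_left_of_le hS₂ hS₂N hN₂)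

lemma sum_le_card_of_le_one {ι : Type*} {s : Finset ι} {f : ι → ℝ} (h : ∀ i ∈ s, f i ≤ 1) :
    ∑ i ∈ s, f i ≤ #s := by
  simpa using sum_le_card_nsmul s f 1 h

section SupportMeanDist

variable {ι α : Type*} [DecidableEq ι]

/-- With `0 / 0 = 0`, two points with empty supports are at distance `0`. -/
noncomputable def supportMeanDist (supp : α → Finset ι) (d : ι → α → α → ℝ) (x y : α) : ℝ :=
  (∑ i ∈ supp x ∪ supp y, d i x y) / #(supp x ∪ supp y)

variable {supp : α → Finset ι} {d : ι → α → α → ℝ}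

lemma ite_dist_add_ite_sdiff_le (h0 : ∀ i x y, 0 ≤ d i x y) (h1 : ∀ i x y, d i x y ≤ 1)
    (htri : ∀ i x y z, d i x z ≤ d i x y + d i y z)
    (hxor : ∀ i x y, Xor (i ∈ supp x) (i ∈ supp y) → d i x y = 1) (i : ι) (x y z : α) :
    (if i ∈ supp x ∪ supp z then d i x z else 0) +
        (if i ∈ supp y \ (supp x ∪ supp z) then 1 else 0) ≤
      (if i ∈ supp x ∪ supp y then d i x y else 0) +
        (if i ∈ supp y ∪ supp z then d i y z else 0) := by
  have := h0 i x y; have := h0 i y z; have := h1 i x z; have := htri i x y z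
  have hxy := hxor i x y; have hyz := hxor i y z; have hxz := hxor i x z
  clear h0 h1 htri hxor
  by_cases hx : i ∈ supp x <;> by_cases hy : i ∈ supp y <;> by_cases hz : i ∈ supp z <;>
    simp_all [Xor]

lemma supportMeanDist_triangle (h0 : ∀ i x y, 0 ≤ d i x y) (h1 : ∀ i x y, d i x y ≤ 1)
    (htri : ∀ i x y z, d i x z ≤ d i x y + d i y z)
    (hxor : ∀ i x y, Xor (i ∈ supp x) (i ∈ supp y) → d i x y = 1) (x y z : α) :
    supportMeanDist supp d x z ≤ supportMeanDist supp d x y + supportMeanDist supp d y z := by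
  have hsum : ∑ i ∈ supp x ∪ supp z, d i x z + #(supp y \ (supp x ∪ supp z)) ≤
      ∑ i ∈ supp x ∪ supp y, d i x y + ∑ i ∈ supp y ∪ supp z, d i y z := by
    set U := supp x ∪ supp y ∪ supp z
    have sum_eq_sum_ite : ∀ A ⊆ U, ∀ f : ι → ℝ,
        ∑ i ∈ A, f i = ∑ i ∈ U, if i ∈ A then f i else 0 :=
      fun A hA f => by rw [sum_ite_mem, inter_eq_right.mpr hA]
    have hxz : supp x ∪ supp z ⊆ U := by intro i; simp [U]; tauto
    have hy : supp y \ (supp x ∪ supp z) ⊆ U := by intro i; simp [U]; tauto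
    have hxy : supp x ∪ supp y ⊆ U := by intro i; simp [U]; tauto
    have hyz : supp y ∪ supp z ⊆ U := by intro i; simp [U]; tauto
    calc ∑ i ∈ supp x ∪ supp z, d i x z + #(supp y \ (supp x ∪ supp z))
        = ∑ i ∈ U, ((if i ∈ supp x ∪ supp z then d i x z else 0) +
            if i ∈ supp y \ (supp x ∪ supp z) then 1 else 0) := by
          rw [sum_add_distrib, ← sum_eq_sum_ite _ hxz, ← sum_eq_sum_ite _ hy]
          simp
      _ ≤ ∑ i ∈ U, ((if i ∈ supp x ∪ supp y then d i x y else 0) +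
            if i ∈ supp y ∪ supp z then d i y z else 0) :=
          sum_le_sum fun i _ => ite_dist_add_ite_sdiff_le h0 h1 htri hxor i x y z
      _ = ∑ i ∈ supp x ∪ supp y, d i x y + ∑ i ∈ supp y ∪ supp z, d i y z := by
          rw [sum_add_distrib, ← sum_eq_sum_ite _ hxy, ← sum_eq_sum_ite _ hyz]
  have hcard : ∀ A ⊆ supp y ∪ (supp x ∪ supp z),
      (#A : ℝ) ≤ #(supp x ∪ supp z) + #(supp y \ (supp x ∪ supp z)) := by
    intro A hA
    rw [← Nat.cast_add, add_comm, card_sdiff_add_card]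
    exact_mod_cast card_le_card hA
  exact div_le_div_add_div_of_add_le (sum_nonneg fun i _ => h0 i x z)
    (sum_le_card_of_le_one fun i _ => h1 i x z) (Nat.cast_nonneg _)
    (sum_nonneg fun i _ => h0 i x y) (sum_le_card_of_le_one fun i _ => h1 i x y)
    (sum_nonneg fun i _ => h0 i y z) (sum_le_card_of_le_one fun i _ => h1 i y z)
    (hcard _ (by intro i; simp; tauto)) (hcard _ (by intro i; simp; tauto)) hsum

end SupportMeanDist

section Jaccard

open scoped symmDiff

variable {α : Type*} [DecidableEq α]

noncomputable def jaccardDist (A B : Finset α) : ℝ :=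
  #(A ∆ B) / #(A ∪ B)

lemma jaccardDist_eq_supportMeanDist (A B : Finset α) :
    jaccardDist A B = supportMeanDist id (fun i A B => if i ∈ A ∆ B then 1 else 0) A B := by
  simp [supportMeanDist, jaccardDist, inter_eq_right.mpr symmDiff_subset_union]

lemma jaccardDist_triangle (A B C : Finset α) :
    jaccardDist A C ≤ jaccardDist A B + jaccardDist B C := by
  simp only [jaccardDist_eq_supportMeanDist]
  refine supportMeanDist_triangle (fun _ _ _ => by split_ifs <;> norm_num)
    (fun _ _ _ => by split_ifs <;> norm_num) (fun i A B C => ?_)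
    (fun i A B h => if_pos (mem_symmDiff.mpr h)) A B C
  have := @symmDiff_triangle _ _ A B C i
  split_ifs <;> simp_all

lemma jaccardDist_nonneg (A B : Finset α) : 0 ≤ jaccardDist A B := by
  unfold jaccardDist; positivity

lemma jaccardDist_le_one (A B : Finset α) : jaccardDist A B ≤ 1 :=
  div_le_one_of_le₀ (mod_cast card_le_card symmDiff_subset_union) (Nat.cast_nonneg _)

lemma jaccardDist_eq_one_of_disjoint {A B : Finset α} (h : Disjoint A B) (hne : A ∪ B ≠ ∅) :
    jaccardDist A B = 1 := by
  rw [jaccardDist, h.symmDiff_eq_sup, sup_eq_union]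
  exact div_self (by simpa using hne)

lemma one_sub_card_inter_div_card_union {A B : Finset α} (h : A ∪ B ≠ ∅) :
    1 - (#(A ∩ B) : ℝ) / #(A ∪ B) = jaccardDist A B := by
  have hpos : (#(A ∪ B) : ℝ) ≠ 0 := by simpa using h
  rw [jaccardDist, symmDiff_eq_sup_sdiff_inf, sup_eq_union, inf_eq_inter,
    cast_card_sdiff inter_subset_union]
  field_simp

end Jaccard

section Bands

variable {T : Type*} [Fintype T]

lemma bandDistS_eq_jaccardDist (s : Sym2 (T → ℝ)) (x y : T → ℝ) :
    bandDistS s x y = jaccardDist (timesInS s x) (timesInS s y) := by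
  unfold bandDistS bandSimS
  split_ifs with h
  · simp [jaccardDist, h]
  · exact one_sub_card_inter_div_card_union h

lemma bandDistS_eq_one_of_xor {s : Sym2 (T → ℝ)} {x y : T → ℝ}
    (h : Xor (timesInS s x ≠ ∅) (timesInS s y ≠ ∅)) : bandDistS s x y = 1 := by
  rw [bandDistS_eq_jaccardDist]
  rcases h with ⟨hx, hy⟩ | ⟨hy, hx⟩ <;> rw [not_not] at *
  · exact jaccardDist_eq_one_of_disjoint (by simp [hy]) (by simpa [hy])
  · exact jaccardDist_eq_one_of_disjoint (by simp [hx]) (by simpa [hx])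

noncomputable def bandSupport (X : Finset (T → ℝ)) (x : T → ℝ) : Finset (Sym2 (T → ℝ)) :=
  (bands X).filter fun s => timesInS s x ≠ ∅

lemma Bxy_eq_union (X : Finset (T → ℝ)) (x y : T → ℝ) :
    Bxy X x y = bandSupport X x ∪ bandSupport X y := by
  simp only [Bxy, bandSupport, ← filter_or, Ne, union_eq_empty, not_and_or]

lemma bandD_eq_supportMeanDist (X : Finset (T → ℝ)) (x y : T → ℝ) :
    bandD X x y = supportMeanDist (bandSupport X) bandDistS x y := by
  rw [bandD, supportMeanDist, Bxy_eq_union, one_div_mul_eq_div]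

end Bands

theorem bandD_triangle_general {T : Type*} [Fintype T]
    (X : Finset (T → ℝ))
    (x y z : T → ℝ) :
    bandD X x z ≤ bandD X x y + bandD X y z := by
  simp only [bandD_eq_supportMeanDist]
  refine supportMeanDist_triangle (fun s x y => ?_) (fun s x y => ?_) (fun s x y z => ?_)
    (fun s x y h => bandDistS_eq_one_of_xor ?_) x y z
  · rw [bandDistS_eq_jaccardDist]; exact jaccardDist_nonneg _ _
  · rw [bandDistS_eq_jaccardDist]; exact jaccardDist_le_one _ _
  · simp only [bandDistS_eq_jaccardDist]; exact jaccardDist_triangle _ _ _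
  · simp only [bandSupport, mem_filter, Xor] at h ⊢
    tauto

/-- For a dataset `X` with at least three observations, the band distance satisfies the
triangle inequality. -/
theorem bandD_triangle {T : Type*} [Fintype T] [Nonempty T]
    (X : Finset (T → ℝ)) (hX : 3 ≤ X.card)
    (x y z : T → ℝ) (hx : x ∈ X) (hy : y ∈ X) (hz : z ∈ X) :
    bandD X x z ≤ bandD X x y + bandD X y z :=
  bandD_triangle_general X x y z
end
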